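/- Aperture dependence for intrinsic square functions: There is a constant C = C(β,n) such that for every β ∈ (0,1], α ∈ [1,∞), f ∈ L¹_loc(ℝⁿ) and x ∈ ℝⁿ, G_{β,α}(f)(x) ≤ C α^{3n/2+β} G_β(f)(x), where G_{β,α}(f)(x) := ( ∫₀^∞ ∫_{|y−x|<αt} [A_β(f)(y,t)]² dy dt/t^{n+1} )^{1/2} and G_β := G_{β,1}. -/

import Mathlib

open MeasureTheory Metric Set
open scoped ENNReal NNReal

noncomputable section

/-- `ℝⁿ`. -/
abbrev Rn (n : ℕ) := EuclideanSpace ℝ (Fin n)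

/-- Wilson's family `C_β(ℝⁿ)`: functions supported in the unit ball, with zero
integral, satisfying a `β`-Hölder bound with constant `1`. -/
def intrinsicFamily (n : ℕ) (β : ℝ) : Set (Rn n → ℝ) :=
  {φ | tsupport φ ⊆ closedBall 0 1 ∧ (∫ x, φ x) = 0 ∧
    ∀ x₁ x₂ : Rn n, |φ x₁ - φ x₂| ≤ dist x₁ x₂ ^ β}

/-- `A_β(f)(y,t) := sup_{φ ∈ C_β} |f ∗ φ_t(y)|`. -/
def intrinsicA (n : ℕ) (β : ℝ) (f : Rn n → ℝ) (y : Rn n) (t : ℝ) : ℝ≥0∞ :=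
  ⨆ (φ : Rn n → ℝ) (_ : φ ∈ intrinsicFamily n β),
    ENNReal.ofReal |∫ z, t ^ (-(n : ℝ)) * φ (t⁻¹ • (y - z)) * f z|

/-- The intrinsic Lusin area function with aperture `α`. -/
def intrinsicG (n : ℕ) (β α : ℝ) (f : Rn n → ℝ) (x : Rn n) : ℝ≥0∞ :=
  (∫⁻ t in Ioi (0 : ℝ),
      (∫⁻ y in ball x (α * t), intrinsicA n β f y t ^ (2 : ℝ)) /
        ENNReal.ofReal (t ^ (n + 1))) ^ ((1 : ℝ) / 2)

/-!
If `t + |y - y'| ≤ t'`, then `A_β f (y, t) ≤ (t'/t)^{n+β} A_β f (y', t')`: for `φ ∈ C_β`, the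
function `ψ = ρ^{-β} φ(ρ · + c)` with `ρ = t'/t`, `c = (y - y')/t` again lies in `C_β` (its support
stays in the unit ball because `ρ ≥ 1 + |c|`), and `φ_t(y - ·) = ρ^{n+β} ψ_{t'}(y' - ·)`.

Cut `t > 0` into dyadic blocks `[2^k, 2^{k+1})` and put `r = α 2^k`. Every point `(y, t)` of the
aperture-`α` cone over the `k`-th block lies below every `(y', s)` with `|y' - x| < r`,
`6r ≤ s < 8r`, at height ratio `s/t ≤ 8α`. So the block contributes at most
`(8α)^{2(n+β)} α^n |B(0,1)|` times each such value `A_β f (y', s)²`, and averaging over this box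
bounds that by the aperture-`1` integral over `[6r, 8r)`; these intervals are disjoint in `k`.
-/

open Function in
theorem pairwise_disjoint_Ico_mul_two_zpow {a b : ℝ} (ha : 0 < a) (hb : b ≤ 2 * a) :
    Pairwise (Disjoint on fun k : ℤ => Ico (a * 2 ^ k) (b * 2 ^ k)) := by
  refine (pairwise_disjoint_on _).2 fun k m hkm => disjoint_left.2 fun s hk hm => ?_
  have : b * 2 ^ k ≤ a * 2 ^ m :=
    calc b * 2 ^ k ≤ a * 2 ^ (k + 1) := by
          rw [zpow_add_one₀ two_ne_zero]; nlinarith [zpow_pos (two_pos (α := ℝ)) k]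
      _ ≤ a * 2 ^ m := by gcongr; exacts [one_le_two, hkm]
  exact (hk.2.trans_le this).not_ge hm.1

theorem lintegral_Ioi_le_of_dyadic {g h : ℝ → ℝ≥0∞} {a b : ℝ} {T : ℝ≥0∞} (ha : 0 < a)
    (hb : b ≤ 2 * a)
    (hgh : ∀ k : ℤ, ∫⁻ t in Ico (2 ^ k) (2 * 2 ^ k), g t ≤
      T * ∫⁻ s in Ico (a * 2 ^ k) (b * 2 ^ k), h s) :
    ∫⁻ t in Ioi 0, g t ≤ T * ∫⁻ t in Ioi 0, h t := by
  have hunion : Ioi (0 : ℝ) = ⋃ k : ℤ, Ico (1 * 2 ^ k) (2 * 2 ^ k) := by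
    refine Subset.antisymm (fun t ht => ?_) (iUnion_subset fun k t ht => ?_)
    · obtain ⟨k, hk⟩ := exists_mem_Ico_zpow (mem_Ioi.1 ht) one_lt_two
      rw [zpow_add_one₀ two_ne_zero, mul_comm] at hk
      exact mem_iUnion.2 ⟨k, by rwa [one_mul]⟩
    · exact (by positivity : (0 : ℝ) < 1 * 2 ^ k).trans_le ht.1
  calc ∫⁻ t in Ioi 0, g t = ∑' k : ℤ, ∫⁻ t in Ico (2 ^ k) (2 * 2 ^ k), g t := by
        rw [hunion, lintegral_iUnion (fun _ => measurableSet_Ico)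
          (pairwise_disjoint_Ico_mul_two_zpow one_pos (by norm_num))]
        simp only [one_mul]
    _ ≤ ∑' k : ℤ, T * ∫⁻ s in Ico (a * 2 ^ k) (b * 2 ^ k), h s := ENNReal.tsum_le_tsum hgh
    _ = T * ∫⁻ s in ⋃ k : ℤ, Ico (a * 2 ^ k) (b * 2 ^ k), h s := by
        rw [ENNReal.tsum_mul_left, lintegral_iUnion (fun _ => measurableSet_Ico)
          (pairwise_disjoint_Ico_mul_two_zpow ha hb)]
    _ ≤ T * ∫⁻ t in Ioi 0, h t := by
        gcongr
        exact iUnion_subset fun k s hs => (by positivity : (0 : ℝ) < a * 2 ^ k).trans_le hs.1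

section Cone

variable {E : Type*} [NormedAddCommGroup E] [NormedSpace ℝ E] [MeasurableSpace E]
  (μ : Measure E)

def coneDensity (F : E → ℝ → ℝ≥0∞) (α : ℝ) (x : E) (t : ℝ) : ℝ≥0∞ :=
  (∫⁻ y in ball x (α * t), F y t ∂μ) / ENNReal.ofReal (t ^ (Module.finrank ℝ E + 1))

variable [BorelSpace E] [FiniteDimensional ℝ E] [μ.IsAddHaarMeasure]
  {F : E → ℝ → ℝ≥0∞} {x : E}

local notation "d" => Module.finrank ℝ E

theorem coneDensity_le {α t : ℝ} {M : ℝ≥0∞} (hα : 0 < α) (ht : 0 < t)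
    (hM : ∀ y ∈ ball x (α * t), F y t ≤ M) :
    coneDensity μ F α x t ≤ M * ENNReal.ofReal (α ^ d / t) * μ (ball 0 1) := by
  rw [coneDensity, ENNReal.div_le_iff_le_mul (Or.inl (ENNReal.ofReal_pos.2 (by positivity)).ne')
    (Or.inl ENNReal.ofReal_ne_top)]
  calc ∫⁻ y in ball x (α * t), F y t ∂μ ≤ M * μ (ball x (α * t)) :=
        (setLIntegral_mono' measurableSet_ball hM).trans_eq (setLIntegral_const _ _)
    _ = M * ENNReal.ofReal (α ^ d / t * t ^ (d + 1)) * μ (ball 0 1) := by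
        rw [Measure.addHaar_ball_of_pos μ x (mul_pos hα ht), mul_assoc]
        congr 3
        field_simp
        ring
    _ = M * ENNReal.ofReal (α ^ d / t) * μ (ball 0 1) * ENNReal.ofReal (t ^ (d + 1)) := by
        rw [ENNReal.ofReal_mul (by positivity)]
        ring

theorem le_coneDensity {r s b : ℝ} {c : ℝ≥0∞} (hr : 0 < r) (hrs : r ≤ s) (hsb : s ≤ b)
    (hc : ∀ y ∈ ball x r, c ≤ F y s) :
    c * ENNReal.ofReal (r ^ d / b ^ (d + 1)) * μ (ball 0 1) ≤ coneDensity μ F 1 x s := by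
  have hs : 0 < s := hr.trans_le hrs
  have hb : 0 < b := hs.trans_le hsb
  rw [coneDensity, ENNReal.le_div_iff_mul_le (Or.inl (ENNReal.ofReal_pos.2 (by positivity)).ne')
    (Or.inl ENNReal.ofReal_ne_top)]
  calc c * ENNReal.ofReal (r ^ d / b ^ (d + 1)) * μ (ball 0 1) * ENNReal.ofReal (s ^ (d + 1))
      = c * ENNReal.ofReal (r ^ d / b ^ (d + 1) * s ^ (d + 1)) * μ (ball 0 1) := by
        rw [ENNReal.ofReal_mul (by positivity)]
        ring
    _ ≤ c * ENNReal.ofReal (r ^ d) * μ (ball 0 1) := by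
        gcongr
        rw [div_mul_eq_mul_div, div_le_iff₀ (by positivity)]
        gcongr
    _ = c * μ (ball x r) := by rw [Measure.addHaar_ball_of_pos μ x hr, mul_assoc]
    _ ≤ ∫⁻ y in ball x r, F y s ∂μ :=
        (setLIntegral_const _ _).symm.trans_le (setLIntegral_mono' measurableSet_ball hc)
    _ ≤ ∫⁻ y in ball x (1 * s), F y s ∂μ := lintegral_mono_set (ball_subset_ball (by linarith))

theorem setLIntegral_Ico_coneDensity_le {α a : ℝ} {M : ℝ≥0∞} (hα : 0 < α) (ha : 0 < a)
    (hM : ∀ t ∈ Ico a (2 * a), ∀ y ∈ ball x (α * t), F y t ≤ M) :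
    ∫⁻ t in Ico a (2 * a), coneDensity μ F α x t ≤ M * ENNReal.ofReal (α ^ d) * μ (ball 0 1) := by
  calc ∫⁻ t in Ico a (2 * a), coneDensity μ F α x t
      ≤ ∫⁻ _ in Ico a (2 * a), M * ENNReal.ofReal (α ^ d / a) * μ (ball 0 1) := by
        refine setLIntegral_mono' measurableSet_Ico fun t ht => ?_
        refine (coneDensity_le μ hα (ha.trans_le ht.1) (hM t ht)).trans ?_
        gcongr
        exact ht.1
    _ = M * ENNReal.ofReal (α ^ d) * μ (ball 0 1) := by
        rw [setLIntegral_const, Real.volume_Ico, mul_right_comm, mul_assoc M,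
          ← ENNReal.ofReal_mul (by positivity)]
        congr 3
        field_simp
        ring

theorem le_setLIntegral_Ico_coneDensity {r a b : ℝ} {c : ℝ≥0∞} (hr : 0 < r) (ha : 1 ≤ a)
    (hab : a ≤ b) (hc : ∀ s ∈ Ico (a * r) (b * r), ∀ y ∈ ball x r, c ≤ F y s) :
    c * ENNReal.ofReal ((b - a) / b ^ (d + 1)) * μ (ball 0 1) ≤
      ∫⁻ s in Ico (a * r) (b * r), coneDensity μ F 1 x s := by
  have hb : 0 < b := by linarith
  calc c * ENNReal.ofReal ((b - a) / b ^ (d + 1)) * μ (ball 0 1)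
      = ∫⁻ _ in Ico (a * r) (b * r),
          c * ENNReal.ofReal (r ^ d / (b * r) ^ (d + 1)) * μ (ball 0 1) := by
        rw [setLIntegral_const, Real.volume_Ico, mul_right_comm _ (μ (ball 0 1)),
          mul_assoc c (ENNReal.ofReal (r ^ d / _)), ← ENNReal.ofReal_mul (by positivity)]
        congr 3
        field_simp
        ring
    _ ≤ ∫⁻ s in Ico (a * r) (b * r), coneDensity μ F 1 x s :=
        setLIntegral_mono' measurableSet_Ico fun s hs =>
          le_coneDensity μ hr (by nlinarith [hs.1]) hs.2.le (hc s hs)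

theorem lintegral_coneDensity_le {p α : ℝ} (hp : 0 ≤ p)
    (hF : ∀ ⦃y y' : E⦄ ⦃t t' : ℝ⦄, 0 < t → t + dist y y' ≤ t' →
      F y t ≤ ENNReal.ofReal ((t' / t) ^ p) * F y' t')
    (hα : 1 ≤ α) (x : E) :
    ∫⁻ t in Ioi 0, coneDensity μ F α x t ≤
      ENNReal.ofReal (8 ^ (p + d + 1) / 2 * α ^ (p + d)) *
        ∫⁻ t in Ioi 0, coneDensity μ F 1 x t := by
  have hα0 : 0 < α := one_pos.trans_le hα
  refine lintegral_Ioi_le_of_dyadic (a := 6 * α) (b := 8 * α) (by positivity) (by linarith)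
    fun k => ?_
  rw [mul_assoc 6 α, mul_assoc 8 α]
  have h2k : (0 : ℝ) < 2 ^ k := by positivity
  set r := α * 2 ^ k
  have hr : 0 < r := by positivity
  have hcompare : ∀ t ∈ Ico (2 ^ k) (2 * 2 ^ k), ∀ y ∈ ball x (α * t),
      ∀ s ∈ Ico (6 * r) (8 * r), ∀ y' ∈ ball x r,
        F y t ≤ ENNReal.ofReal ((8 * α) ^ p) * F y' s := by
    intro t ht y hy s hs y' hy'
    have ht0 : 0 < t := h2k.trans_le ht.1
    have hcone : t + dist y y' ≤ s := by
      have := dist_triangle_right y y' x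
      rw [mem_ball] at hy hy'
      nlinarith [hs.1, ht.2, mul_le_mul_of_nonneg_right hα h2k.le]
    have hratio : s / t ≤ 8 * α := by
      rw [div_le_iff₀ ht0]
      nlinarith [hs.2, ht.1]
    refine (hF ht0 hcone).trans (mul_le_mul_left (ENNReal.ofReal_le_ofReal ?_) _)
    exact Real.rpow_le_rpow (div_nonneg (by linarith [dist_nonneg (x := y) (y := y')]) ht0.le)
      hratio hp
  set L := ∫⁻ t in Ico (2 ^ k) (2 * 2 ^ k), coneDensity μ F α x t
  set Q := ENNReal.ofReal ((8 * α) ^ p * α ^ d) * μ (ball 0 1)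
  have hupper : ∀ s ∈ Ico (6 * r) (8 * r), ∀ y' ∈ ball x r, L ≤ F y' s * Q := by
    intro s hs y' hy'
    refine (setLIntegral_Ico_coneDensity_le μ hα0 h2k
      fun t ht y hy => hcompare t ht y hy s hs y' hy').trans_eq ?_
    simp only [Q, ENNReal.ofReal_mul (by positivity : (0 : ℝ) ≤ (8 * α) ^ p)]
    ring
  have hlower := le_setLIntegral_Ico_coneDensity μ (c := L / Q) hr (by norm_num) (by norm_num)
    fun s hs y' hy' => ENNReal.div_le_of_le_mul (hupper s hs y' hy')
  have hQ : Q = ENNReal.ofReal (8 ^ (p + d + 1) / 2 * α ^ (p + d)) *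
      (ENNReal.ofReal ((8 - 6) / 8 ^ (d + 1)) * μ (ball 0 1)) := by
    have hconst : (8 * α) ^ p * α ^ d =
        8 ^ (p + d + 1) / 2 * α ^ (p + d) * ((8 - 6) / 8 ^ (d + 1)) := by
      rw [Real.mul_rpow (by norm_num) hα0.le, Real.rpow_add (by norm_num),
        Real.rpow_add (by norm_num), Real.rpow_add hα0, Real.rpow_natCast, Real.rpow_natCast,
        Real.rpow_one]
      field_simp
      ring
    rw [← mul_assoc, ← ENNReal.ofReal_mul (by positivity), ← hconst]
  have hQ0 : Q ≠ 0 := mul_ne_zero (ENNReal.ofReal_pos.2 (by positivity)).ne'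
    (measure_ball_pos μ _ one_pos).ne'
  have hQtop : Q ≠ ⊤ := ENNReal.mul_ne_top ENNReal.ofReal_ne_top measure_ball_lt_top.ne
  calc L = L / Q * Q := (ENNReal.div_mul_cancel hQ0 hQtop).symm
    _ = ENNReal.ofReal (8 ^ (p + d + 1) / 2 * α ^ (p + d)) *
          (L / Q * ENNReal.ofReal ((8 - 6) / 8 ^ (d + 1)) * μ (ball 0 1)) := by
        rw [hQ]; ring
    _ ≤ _ := by gcongr

end Cone

theorem smul_add_mem_intrinsicFamily {n : ℕ} {β : ℝ} {φ : Rn n → ℝ}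
    (hφ : φ ∈ intrinsicFamily n β) {ρ : ℝ} {c : Rn n} (hρ : 1 + ‖c‖ ≤ ρ) :
    (fun u => ρ ^ (-β) * φ (ρ • u + c)) ∈ intrinsicFamily n β := by
  obtain ⟨hsupp, hint, hhol⟩ := hφ
  have hρ0 : 0 < ρ := by linarith [norm_nonneg c]
  refine ⟨closure_minimal (fun u hu => ?_) isClosed_closedBall, ?_, fun u₁ u₂ => ?_⟩
  · have hu' : ρ • u + c ∈ closedBall (0 : Rn n) 1 :=
      hsupp (subset_tsupport _ (right_ne_zero_of_mul hu))
    rw [mem_closedBall_zero_iff] at hu' ⊢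
    have : ρ * ‖u‖ ≤ ρ * 1 := by
      calc ρ * ‖u‖ = ‖(ρ • u + c) - c‖ := by simp [norm_smul, abs_of_pos hρ0]
        _ ≤ 1 + ‖c‖ := (norm_sub_le _ _).trans (by gcongr)
        _ ≤ ρ * 1 := by rwa [mul_one]
    exact le_of_mul_le_mul_left this hρ0
  · rw [integral_const_mul, Measure.integral_comp_smul volume (fun v => φ (v + c)),
      integral_add_right_eq_self φ c, hint, smul_zero, mul_zero]
  · have hdist : dist (ρ • u₁ + c) (ρ • u₂ + c) = ρ * dist u₁ u₂ := by
      rw [dist_add_right, dist_smul₀, Real.norm_of_nonneg hρ0.le]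
    calc |ρ ^ (-β) * φ (ρ • u₁ + c) - ρ ^ (-β) * φ (ρ • u₂ + c)|
        = ρ ^ (-β) * |φ (ρ • u₁ + c) - φ (ρ • u₂ + c)| := by
          rw [← mul_sub, abs_mul, abs_of_pos (Real.rpow_pos_of_pos hρ0 _)]
      _ ≤ ρ ^ (-β) * (ρ * dist u₁ u₂) ^ β := by rw [← hdist]; gcongr; exact hhol _ _
      _ = dist u₁ u₂ ^ β := by
          rw [Real.mul_rpow hρ0.le dist_nonneg, ← mul_assoc, ← Real.rpow_add hρ0, neg_add_cancel,
            Real.rpow_zero, one_mul]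

theorem intrinsicA_le_of_add_dist_le {n : ℕ} {β : ℝ} (f : Rn n → ℝ) {y y' : Rn n} {t t' : ℝ}
    (ht : 0 < t) (h : t + dist y y' ≤ t') :
    intrinsicA n β f y t ≤ ENNReal.ofReal ((t' / t) ^ ((n : ℝ) + β)) * intrinsicA n β f y' t' := by
  have ht' : 0 < t' := by linarith [dist_nonneg (x := y) (y := y')]
  set ρ := t' / t
  have hρ0 : 0 < ρ := div_pos ht' ht
  set c : Rn n := t⁻¹ • (y - y')
  have hρc : 1 + ‖c‖ ≤ ρ := by
    rw [norm_smul, norm_inv, Real.norm_of_nonneg ht.le, ← dist_eq_norm, le_div_iff₀ ht]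
    field_simp
    linarith
  refine iSup₂_le fun φ hφ => ?_
  set ψ : Rn n → ℝ := fun u => ρ ^ (-β) * φ (ρ • u + c)
  have hkernel : ∀ z, t ^ (-(n : ℝ)) * φ (t⁻¹ • (y - z)) * f z =
      ρ ^ ((n : ℝ) + β) * (t' ^ (-(n : ℝ)) * ψ (t'⁻¹ • (y' - z)) * f z) := by
    intro z
    have harg : ρ • t'⁻¹ • (y' - z) + c = t⁻¹ • (y - z) := by
      rw [smul_smul, show ρ * t'⁻¹ = t⁻¹ by simp only [ρ]; field_simp]
      module
    have hscale : ρ ^ ((n : ℝ) + β) * t' ^ (-(n : ℝ)) * ρ ^ (-β) = t ^ (-(n : ℝ)) := by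
      rw [Real.rpow_add hρ0, Real.div_rpow ht'.le ht.le, Real.rpow_neg ht'.le,
        Real.rpow_neg ht.le, Real.rpow_neg hρ0.le]
      field_simp
    simp only [ψ, harg, ← hscale]
    ring
  have hint : |∫ z, t ^ (-(n : ℝ)) * φ (t⁻¹ • (y - z)) * f z| =
      ρ ^ ((n : ℝ) + β) * |∫ z, t' ^ (-(n : ℝ)) * ψ (t'⁻¹ • (y' - z)) * f z| := by
    simp_rw [hkernel]
    rw [integral_const_mul, abs_mul, abs_of_pos (Real.rpow_pos_of_pos hρ0 _)]
  rw [hint, ENNReal.ofReal_mul (Real.rpow_nonneg hρ0.le _)]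
  gcongr
  exact le_iSup₂ (f := fun φ (_ : φ ∈ intrinsicFamily n β) =>
    ENNReal.ofReal |∫ z, t' ^ (-(n : ℝ)) * φ (t'⁻¹ • (y' - z)) * f z|) ψ
    (smul_add_mem_intrinsicFamily hφ hρc)

theorem intrinsicA_rpow_two_le_of_add_dist_le {n : ℕ} {β : ℝ} (f : Rn n → ℝ) {y y' : Rn n}
    {t t' : ℝ} (ht : 0 < t) (h : t + dist y y' ≤ t') :
    intrinsicA n β f y t ^ (2 : ℝ) ≤
      ENNReal.ofReal ((t' / t) ^ (2 * ((n : ℝ) + β))) * intrinsicA n β f y' t' ^ (2 : ℝ) := by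
  have ht' : 0 < t' := by linarith [dist_nonneg (x := y) (y := y')]
  calc intrinsicA n β f y t ^ (2 : ℝ)
      ≤ (ENNReal.ofReal ((t' / t) ^ ((n : ℝ) + β)) * intrinsicA n β f y' t') ^ (2 : ℝ) :=
        ENNReal.rpow_le_rpow (intrinsicA_le_of_add_dist_le f ht h) (by norm_num)
    _ = _ := by
        rw [ENNReal.mul_rpow_of_nonneg _ _ (by norm_num),
          ENNReal.ofReal_rpow_of_nonneg (by positivity) (by norm_num),
          ← Real.rpow_mul (by positivity), mul_comm _ (2 : ℝ)]

theorem intrinsicG_eq_lintegral_coneDensity (n : ℕ) (β α : ℝ) (f : Rn n → ℝ) (x : Rn n) :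
    intrinsicG n β α f x = (∫⁻ t in Ioi 0,
      coneDensity volume (fun y t => intrinsicA n β f y t ^ (2 : ℝ)) α x t) ^ ((1 : ℝ) / 2) := by
  simp only [intrinsicG, coneDensity, finrank_euclideanSpace_fin]

/-- Aperture dependence for the intrinsic square function:
`G_{β,α}(f)(x) ≤ C α^{3n/2+β} G_β(f)(x)` with `C = C(β,n)`. -/
theorem intrinsicG_aperture (n : ℕ) :
    ∀ β : ℝ, 0 < β → β ≤ 1 → ∃ C > (0 : ℝ), ∀ α : ℝ, 1 ≤ α →
      ∀ f : Rn n → ℝ, LocallyIntegrable f volume → ∀ x : Rn n,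
        intrinsicG n β α f x ≤
          ENNReal.ofReal (C * α ^ ((3 * n : ℝ) / 2 + β)) * intrinsicG n β 1 f x := by
  intro β hβ _
  set p := 2 * ((n : ℝ) + β)
  refine ⟨(8 ^ (p + n + 1) / 2) ^ ((1 : ℝ) / 2), by positivity, fun α hα f _ x => ?_⟩
  have hcone := lintegral_coneDensity_le volume (by positivity)
    (fun _ _ _ _ => intrinsicA_rpow_two_le_of_add_dist_le (β := β) f) hα x
  rw [finrank_euclideanSpace_fin] at hcone
  rw [intrinsicG_eq_lintegral_coneDensity, intrinsicG_eq_lintegral_coneDensity]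
  refine (ENNReal.rpow_le_rpow hcone (by norm_num)).trans_eq ?_
  rw [ENNReal.mul_rpow_of_nonneg _ _ (by norm_num),
    ENNReal.ofReal_rpow_of_nonneg (by positivity) (by norm_num),
    Real.mul_rpow (by positivity) (by positivity), ← Real.rpow_mul (by positivity)]
  congr 4
  ring
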